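/- arXiv:2304.05070 — 3 statements merged into one kernel-verified Lean document; each statement's English description precedes it below -/
import Mathlib

section
/- Let S and S' be schemas and T a graph transformation with Γ_T ⊆ Γ_{S'} and Σ_T ⊆ Σ_{S'}. Then T(G) ∈ L(S') for every G ∈ L(S) if and only if (T,S) ⊨ ⊤ ⊑ ⊔Γ_T and (T,S) ⊨ T_{S'} (i.e., T(G) satisfies every inclusion of the TBox T_{S'} for every G ∈ L(S)). -/
namespace GDB

/-! ## Signed roles (two-way edge labels) -/

/-- A signed role: an edge label traversed forwards or backwards. -/
inductive SRole (E : Type) : Type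
  | fwd (r : E)
  | bwd (r : E)

/-- The underlying edge label of a signed role. -/
def SRole.base {E : Type} : SRole E → E
  | .fwd r => r
  | .bwd r => r

/-- The inverse of a signed role. -/
def SRole.inv {E : Type} : SRole E → SRole E
  | .fwd r => .bwd r
  | .bwd r => .fwd r

/-! ## Graphs -/

/-- A graph over node labels `N` and edge labels `E`; nodes are drawn from
the countably infinite set of node identifiers `ℕ`. -/
structure Graph (N E : Type) : Type where
  dom : Set ℕ
  nodeLab : N → Set ℕ
  edgeRel : E → Set (ℕ × ℕ)
  nodeLab_sub : ∀ A, nodeLab A ⊆ dom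
  edgeRel_dom : ∀ r u v, (u, v) ∈ edgeRel r → u ∈ dom ∧ v ∈ dom

namespace Graph

variable {N E : Type}

/-- Interpretation of a signed role. -/
def srel (G : Graph N E) : SRole E → Set (ℕ × ℕ)
  | .fwd r => G.edgeRel r
  | .bwd r => {p | (p.2, p.1) ∈ G.edgeRel r}

/-- A graph is finite if its domain is finite and all but finitely many labels
have empty interpretation. -/
def Finite (G : Graph N E) : Prop :=
  G.dom.Finite ∧ {A | G.nodeLab A ≠ ∅}.Finite ∧ {r | G.edgeRel r ≠ ∅}.Finite

/-- The `R`-successors of node `u` that carry label `B`. -/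
def succ (G : Graph N E) (R : SRole E) (B : N) (u : ℕ) : Set ℕ :=
  {v | (u, v) ∈ G.srel R ∧ v ∈ G.nodeLab B}

/-- A graph is over node labels `Γ₀` and edge labels `σ₀` if it uses no label
outside of these sets. -/
def Over (G : Graph N E) (Γ₀ : Set N) (σ₀ : Set E) : Prop :=
  (∀ A, A ∉ Γ₀ → G.nodeLab A = ∅) ∧ (∀ r, r ∉ σ₀ → G.edgeRel r = ∅)

/-- The set of (labelled) edges of a graph, as triples. -/
def edgeTriples (G : Graph N E) : Set (E × ℕ × ℕ) :=
  {t | (t.2.1, t.2.2) ∈ G.edgeRel t.1}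

/-- Undirected adjacency. -/
def Adj (G : Graph N E) (u v : ℕ) : Prop :=
  ∃ r, (u, v) ∈ G.edgeRel r ∨ (v, u) ∈ G.edgeRel r

/-- The graph is connected (as an undirected multigraph). -/
def ConnectedG (G : Graph N E) : Prop :=
  ∀ u ∈ G.dom, ∀ v ∈ G.dom, Relation.ReflTransGen G.Adj u v

/-- The graph is acyclic (as an undirected multigraph): there is no closed walk
using pairwise distinct edges. -/
def AcyclicG (G : Graph N E) : Prop :=
  ¬ ∃ (k : ℕ) (es : Fin (k + 1) → E × ℕ × ℕ) (vs : Fin (k + 2) → ℕ),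
      Function.Injective es ∧ vs 0 = vs (Fin.last (k + 1)) ∧
      ∀ i : Fin (k + 1), es i ∈ G.edgeTriples ∧
        ((es i).2 = (vs i.castSucc, vs i.succ) ∨ (es i).2 = (vs i.succ, vs i.castSucc))

/-- The degree of a node: the number of incident edges, a loop contributing 2. -/
noncomputable def degree (G : Graph N E) (u : ℕ) : ℕ :=
  {p : (E × ℕ × ℕ) × Bool |
      p.1 ∈ G.edgeTriples ∧ (if p.2 then p.1.2.1 = u else p.1.2.2 = u)}.ncard

/-- The node `u` has finitely many incident edges. -/
def FinBranching (G : Graph N E) (u : ℕ) : Prop :=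
  {t | t ∈ G.edgeTriples ∧ (t.2.1 = u ∨ t.2.2 = u)}.Finite

/-- The subgraph of `G` induced by the set `X` of nodes. -/
def induce (G : Graph N E) (X : Set ℕ) : Graph N E where
  dom := G.dom ∩ X
  nodeLab A := G.nodeLab A ∩ X
  edgeRel r := {p | p ∈ G.edgeRel r ∧ p.1 ∈ X ∧ p.2 ∈ X}
  nodeLab_sub := by
    intro A u hu
    exact ⟨G.nodeLab_sub A hu.1, hu.2⟩
  edgeRel_dom := by
    intro r u v h
    exact ⟨⟨(G.edgeRel_dom r u v h.1).1, h.2.1⟩, ⟨(G.edgeRel_dom r u v h.1).2, h.2.2⟩⟩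

/-- Expand a graph with an additional assignment of sets of nodes to node labels. -/
def expand (G : Graph N E) (ext : N → Set ℕ) : Graph N E where
  dom := G.dom
  nodeLab A := G.nodeLab A ∪ (ext A ∩ G.dom)
  edgeRel := G.edgeRel
  nodeLab_sub := by
    intro A u hu
    rcases hu with h | h
    · exact G.nodeLab_sub A h
    · exact h.2
  edgeRel_dom := G.edgeRel_dom

end Graph

/-! ## Schemas with participation constraints -/

/-- Participation constraint symbols: `?`, `1`, `+`, `*`, `0`. -/
inductive Card : Type
  | opt   -- ?
  | one   -- 1
  | plus  -- +
  | star  -- *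
  | zero  -- 0

/-- The set of cardinalities allowed by each participation constraint symbol. -/
def Card.allowed : Card → Set ℕ
  | .opt => {0, 1}
  | .one => {1}
  | .plus => {n | 1 ≤ n}
  | .star => Set.univ
  | .zero => {0}

/-- A set of successors satisfies a participation constraint. -/
def Card.ok (c : Card) (s : Set ℕ) : Prop :=
  c = Card.star ∨ (s.Finite ∧ s.ncard ∈ c.allowed)

/-- The preorder on participation constraints: containment of allowed cardinalities. -/
def Card.le (c d : Card) : Prop := c.allowed ⊆ d.allowed

/-- A schema: finite sets of allowed node and edge labels and participation
constraints. -/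
structure Schema (N E : Type) : Type where
  nlab : Finset N
  elabs : Finset E
  delta : N → SRole E → N → Card

/-- A schema is over `Γ₀` and `σ₀`: its label sets are `Γ₀` and `σ₀` (and its
participation-constraint function is trivial outside of its intended domain
`Γ₀ × σ₀± × Γ₀`, encoding a function with that restricted domain). -/
def Schema.Over {N E : Type} (S : Schema N E) (Γ₀ : Set N) (σ₀ : Set E) : Prop :=
  (↑S.nlab : Set N) = Γ₀ ∧ (↑S.elabs : Set E) = σ₀ ∧
  ∀ (A : N) (R : SRole E) (B : N),
    ¬(A ∈ Γ₀ ∧ SRole.base R ∈ σ₀ ∧ B ∈ Γ₀) → S.delta A R B = Card.star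

/-- A graph conforms to a schema: every node has exactly one label, which is
an allowed node label, every edge label is allowed, and all participation
constraints hold. -/
def Conforms {N E : Type} (G : Graph N E) (S : Schema N E) : Prop :=
  (∀ u ∈ G.dom, ∃! A, u ∈ G.nodeLab A) ∧
  (∀ A, (G.nodeLab A).Nonempty → A ∈ S.nlab) ∧
  (∀ r, (G.edgeRel r).Nonempty → r ∈ S.elabs) ∧
  (∀ A ∈ S.nlab, ∀ B ∈ S.nlab, ∀ R : SRole E, SRole.base R ∈ S.elabs →
    ∀ u ∈ G.nodeLab A, Card.ok (S.delta A R B) (G.succ R B u))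

/-- The set of finite graphs conforming to a schema. -/
def L {N E : Type} (S : Schema N E) : Set (Graph N E) :=
  {G | Graph.Finite G ∧ Conforms G S}

/-! ## ALCIF concepts and TBoxes -/

/-- ALCIF concepts. -/
inductive Concept (N E : Type) : Type
  | bot
  | atom (A : N)
  | inter (C D : Concept N E)
  | neg (C : Concept N E)
  | ex (R : SRole E) (C : Concept N E)
  | le1 (R : SRole E) (C : Concept N E)

/-- Interpretation of ALCIF concepts in a graph. -/
def Concept.interp {N E : Type} (G : Graph N E) : Concept N E → Set ℕ
  | .bot => ∅
  | .atom A => G.nodeLab A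
  | .inter C D => Concept.interp G C ∩ Concept.interp G D
  | .neg C => G.dom \ Concept.interp G C
  | .ex R C => {u | u ∈ G.dom ∧ ∃ v, (u, v) ∈ G.srel R ∧ v ∈ Concept.interp G C}
  | .le1 R C => {u | u ∈ G.dom ∧ {v | (u, v) ∈ G.srel R ∧ v ∈ Concept.interp G C}.Subsingleton}

/-- A concept inclusion. -/
abbrev CI (N E : Type) := Concept N E × Concept N E

/-- A graph satisfies a concept inclusion. -/
def SatCI {N E : Type} (G : Graph N E) (ci : CI N E) : Prop :=
  Concept.interp G ci.1 ⊆ Concept.interp G ci.2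

/-- A graph is a model of a TBox. -/
def Models {N E : Type} (G : Graph N E) (T : Set (CI N E)) : Prop :=
  ∀ ci ∈ T, SatCI G ci

/-- The TBox `T_S` corresponding to a schema `S`. -/
def schemaTBox {N E : Type} (S : Schema N E) : Set (CI N E) :=
  {ci | ∃ A ∈ S.nlab, ∃ B ∈ S.nlab, ∃ R : SRole E, SRole.base R ∈ S.elabs ∧
    (((S.delta A R B = Card.one ∨ S.delta A R B = Card.plus) ∧
        ci = (Concept.atom A, Concept.ex R (Concept.atom B))) ∨
     ((S.delta A R B = Card.one ∨ S.delta A R B = Card.opt ∨ S.delta A R B = Card.zero) ∧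
        ci = (Concept.atom A, Concept.le1 R (Concept.atom B))) ∨
     (S.delta A R B = Card.zero ∧
        ci = (Concept.atom A, Concept.neg (Concept.ex R (Concept.atom B)))))}

/-- `T̂_S`: the schema TBox together with disjointness of distinct node labels. -/
def hatTBox {N E : Type} (S : Schema N E) : Set (CI N E) :=
  schemaTBox S ∪ {ci | ∃ A ∈ S.nlab, ∃ B ∈ S.nlab, A ≠ B ∧
    ci = (Concept.inter (Concept.atom A) (Concept.atom B), Concept.bot)}

/-! ## L0 statements -/

/-- L0 statements: `A ⊑ ∃R.B`, `A ⊑ ∄R.B`, `A ⊑ ∃≤1 R.B`. -/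
inductive L0Stmt (N E : Type) : Type
  | exis (A : N) (R : SRole E) (B : N)
  | nex (A : N) (R : SRole E) (B : N)
  | le1 (A : N) (R : SRole E) (B : N)

/-- Satisfaction of an L0 statement in a graph. -/
def L0Sat {N E : Type} (G : Graph N E) : L0Stmt N E → Prop
  | .exis A R B => ∀ u ∈ G.nodeLab A, ∃ v, (u, v) ∈ G.srel R ∧ v ∈ G.nodeLab B
  | .nex A R B => ∀ u ∈ G.nodeLab A, ¬ ∃ v, (u, v) ∈ G.srel R ∧ v ∈ G.nodeLab B
  | .le1 A R B => ∀ u ∈ G.nodeLab A, (G.succ R B u).Subsingleton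

/-- An L0 statement is over node labels `Γ₀` and edge labels `σ₀`. -/
def L0Stmt.Over {N E : Type} (st : L0Stmt N E) (Γ₀ : Set N) (σ₀ : Set E) : Prop :=
  match st with
  | .exis A R B => A ∈ Γ₀ ∧ SRole.base R ∈ σ₀ ∧ B ∈ Γ₀
  | .nex A R B => A ∈ Γ₀ ∧ SRole.base R ∈ σ₀ ∧ B ∈ Γ₀
  | .le1 A R B => A ∈ Γ₀ ∧ SRole.base R ∈ σ₀ ∧ B ∈ Γ₀

/-- Coherence of an L0 TBox. -/
def Coherent {N E : Type} (T : Set (L0Stmt N E)) : Prop :=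
  (∀ (A : N) (R : SRole E) (B : N),
      ¬(L0Stmt.exis A R B ∈ T ∧ L0Stmt.nex A R B ∈ T)) ∧
  (∀ (A : N) (R : SRole E) (B : N), L0Stmt.nex A R B ∈ T → L0Stmt.le1 A R B ∈ T)

/-- The L0 TBox corresponding to a schema. -/
def schemaL0 {N E : Type} (S : Schema N E) : Set (L0Stmt N E) :=
  {st | ∃ A ∈ S.nlab, ∃ B ∈ S.nlab, ∃ R : SRole E, SRole.base R ∈ S.elabs ∧
    (((S.delta A R B = Card.one ∨ S.delta A R B = Card.plus) ∧ st = L0Stmt.exis A R B) ∨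
     ((S.delta A R B = Card.one ∨ S.delta A R B = Card.opt ∨ S.delta A R B = Card.zero) ∧
        st = L0Stmt.le1 A R B) ∨
     (S.delta A R B = Card.zero ∧ st = L0Stmt.nex A R B))}

/-! ## Two-way regular path expressions and C2RPQs -/

/-- Two-way regular path expressions. -/
inductive RE (N E : Type) : Type
  | empty
  | eps
  | atom (A : N)
  | role (R : SRole E)
  | comp (e f : RE N E)
  | plus (e f : RE N E)
  | star (e : RE N E)

/-- Semantics of a two-way regular path expression: the binary relation of
pairs of nodes connected by a witnessing path. -/
def RE.sem {N E : Type} (G : Graph N E) : RE N E → Set (ℕ × ℕ)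
  | .empty => ∅
  | .eps => {p | p.1 = p.2 ∧ p.1 ∈ G.dom}
  | .atom A => {p | p.1 = p.2 ∧ p.1 ∈ G.nodeLab A}
  | .role R => G.srel R
  | .comp e f => {p | ∃ w, (p.1, w) ∈ RE.sem G e ∧ (w, p.2) ∈ RE.sem G f}
  | .plus e f => RE.sem G e ∪ RE.sem G f
  | .star e => {p | p.1 ∈ G.dom ∧ Relation.ReflTransGen (fun a b => (a, b) ∈ RE.sem G e) p.1 p.2}

/-- The node labels occurring in a two-way regular path expression. -/
def RE.nlabels {N E : Type} : RE N E → Set N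
  | .atom A => {A}
  | .comp e f => RE.nlabels e ∪ RE.nlabels f
  | .plus e f => RE.nlabels e ∪ RE.nlabels f
  | .star e => RE.nlabels e
  | _ => ∅

/-- A C2RPQ with free variables `V`: a finite conjunction of atoms `φ(z, z')`
whose variables are either free (`V`) or among `n` existentially quantified
variables. A Boolean C2RPQ is one with `V = Empty`. -/
structure C2RPQ (N E : Type) (V : Type) : Type where
  n : ℕ
  atoms : List (RE N E × ((V ⊕ Fin n) × (V ⊕ Fin n)))

/-- The answers of a C2RPQ in a graph: assignments of nodes to the free
variables that can be extended to the existential variables so that all atoms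
are satisfied. -/
def C2RPQ.answers {N E V : Type} (q : C2RPQ N E V) (G : Graph N E) : Set (V → ℕ) :=
  {t | (∀ v, t v ∈ G.dom) ∧ ∃ s : Fin q.n → ℕ, (∀ i, s i ∈ G.dom) ∧
    ∀ a ∈ q.atoms, (Sum.elim t s a.2.1, Sum.elim t s a.2.2) ∈ RE.sem G a.1}

/-- Answers of a union of C2RPQs. -/
def UAnswers {N E V : Type} (Q : List (C2RPQ N E V)) (G : Graph N E) : Set (V → ℕ) :=
  {t | ∃ q ∈ Q, t ∈ q.answers G}

/-- A trivial atom: `∅(x,x)`, `ε(x,x)` or `A(x,x)`. -/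
def TrivialAtom {N E α : Type} (a : RE N E × α × α) : Prop :=
  a.2.1 = a.2.2 ∧ (a.1 = RE.empty ∨ a.1 = RE.eps ∨ ∃ A, a.1 = RE.atom A)

/-- Acyclicity of a C2RPQ: the multigraph on its variables with one edge per
non-trivial atom has no path of pairwise distinct edges visiting a node twice. -/
def C2RPQ.Acyclic {N E V : Type} (q : C2RPQ N E V) : Prop :=
  ¬ ∃ (k : ℕ) (es : Fin (k + 1) → Fin q.atoms.length) (vs : Fin (k + 2) → V ⊕ Fin q.n),
      Function.Injective es ∧ (∃ i j : Fin (k + 2), i ≠ j ∧ vs i = vs j) ∧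
      ∀ i : Fin (k + 1), ¬ TrivialAtom (q.atoms.get (es i)) ∧
        ((q.atoms.get (es i)).2 = (vs i.castSucc, vs i.succ) ∨
         (q.atoms.get (es i)).2 = (vs i.succ, vs i.castSucc))

/-- Adjacency of variables in the multigraph of a C2RPQ. -/
def C2RPQ.VarAdj {N E V : Type} (q : C2RPQ N E V) (x y : V ⊕ Fin q.n) : Prop :=
  ∃ a ∈ q.atoms, (a.2 = (x, y) ∨ a.2 = (y, x))

/-- Connectedness of the multigraph of a C2RPQ. -/
def C2RPQ.Connected {N E V : Type} (q : C2RPQ N E V) : Prop :=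
  ∀ x y : V ⊕ Fin q.n, Relation.ReflTransGen q.VarAdj x y

/-- A unary 2RPQ: a single-atom query of the form `∃y. φ(x,y)` or `∃y. φ(y,x)`. -/
def IsUnary2RPQ {N E : Type} (q : C2RPQ N E (Fin 1)) : Prop :=
  ∃ φ : RE N E,
    q = ⟨1, [(φ, (Sum.inl (0 : Fin 1), Sum.inr (0 : Fin 1)))]⟩ ∨
    q = ⟨1, [(φ, (Sum.inr (0 : Fin 1), Sum.inl (0 : Fin 1)))]⟩

/-- A Boolean 2RPQ: a Boolean query with a single atom. -/
def IsBoolean2RPQ {N E : Type} (q : C2RPQ N E Empty) : Prop :=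
  ∃ (φ : RE N E) (z z' : Empty ⊕ Fin q.n), q.atoms = [(φ, (z, z'))]

/-! ## The query rewriting `P̂` -/

/-- The disjunction `A₁ + ⋯ + A_n` of all node labels of a schema. -/
noncomputable def labelUnion {N E : Type} (S : Schema N E) : RE N E :=
  S.nlab.toList.foldr (fun A e => RE.plus (RE.atom A) e) RE.empty

/-- The rewriting of a two-way regular expression: insert the disjunction of
all node labels of `S` before and after every edge label, and replace labels
not in `Γ_S ∪ Σ_S±` by `∅`. -/
noncomputable def RE.hat {N E : Type} [DecidableEq N] [DecidableEq E] (S : Schema N E) : RE N E → RE N E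
  | .empty => .empty
  | .eps => .eps
  | .atom A => if A ∈ S.nlab then .atom A else .empty
  | .role R => if SRole.base R ∈ S.elabs then
      .comp (labelUnion S) (.comp (.role R) (labelUnion S)) else .empty
  | .comp e f => .comp (RE.hat S e) (RE.hat S f)
  | .plus e f => .plus (RE.hat S e) (RE.hat S f)
  | .star e => .star (RE.hat S e)

/-- The rewriting `q̂` of a C2RPQ. -/
noncomputable def C2RPQ.hat {N E V : Type} [DecidableEq N] [DecidableEq E] (S : Schema N E)
    (q : C2RPQ N E V) : C2RPQ N E V :=
  { n := q.n, atoms := q.atoms.map (fun a => (RE.hat S a.1, a.2)) }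

/-! ## Graph transformations -/

/-- A family of node constructors: for every node label `A`, an injective
function `f_A : ℕ^{k_A} → ℕ`, the ranges being pairwise disjoint. -/
structure Constructors (N : Type) : Type where
  arity : N → ℕ
  f : (A : N) → (Fin (arity A) → ℕ) → ℕ
  inj : ∀ A, Function.Injective (f A)
  disj : ∀ A B, A ≠ B → ∀ s t, f A s ≠ f B t

/-- A node rule `A(f_A(x̄)) ← q(x̄)` with acyclic body. -/
structure NodeRule (N E : Type) (F : Constructors N) : Type where
  head : N
  body : C2RPQ N E (Fin (F.arity head))
  acyc : body.Acyclic

/-- An edge rule `r(f_A(x̄), f_B(ȳ)) ← q(x̄, ȳ)` with acyclic body. -/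
structure EdgeRule (N E : Type) (F : Constructors N) : Type where
  lab : E
  src : N
  tgt : N
  body : C2RPQ N E (Fin (F.arity src) ⊕ Fin (F.arity tgt))
  acyc : body.Acyclic

/-- A graph transformation: a finite set of node and edge rules. -/
structure Transformation (N E : Type) (F : Constructors N) : Type where
  nodeRules : List (NodeRule N E F)
  edgeRules : List (EdgeRule N E F)

variable {N E : Type}

/-- The result of applying a transformation to a graph. -/
def Transformation.apply {F : Constructors N} (T : Transformation N E F)
    (G : Graph N E) : Graph N E where
  dom := {u | (∃ ρ ∈ T.nodeRules, ∃ t ∈ ρ.body.answers G, u = F.f ρ.head t) ∨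
              (∃ ρ ∈ T.edgeRules, ∃ t ∈ ρ.body.answers G,
                 u = F.f ρ.src (fun i => t (Sum.inl i)) ∨
                 u = F.f ρ.tgt (fun i => t (Sum.inr i)))}
  nodeLab A := {u | ∃ ρ ∈ T.nodeRules, ρ.head = A ∧
                  ∃ t ∈ ρ.body.answers G, u = F.f ρ.head t}
  edgeRel r := {p | ∃ ρ ∈ T.edgeRules, ρ.lab = r ∧
                  ∃ t ∈ ρ.body.answers G,
                    p.1 = F.f ρ.src (fun i => t (Sum.inl i)) ∧
                    p.2 = F.f ρ.tgt (fun i => t (Sum.inr i))}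
  nodeLab_sub := by
    rintro A u ⟨ρ, hρ, _, t, ht, rfl⟩
    exact Or.inl ⟨ρ, hρ, t, ht, rfl⟩
  edgeRel_dom := by
    rintro r u v ⟨ρ, hρ, _, t, ht, h1, h2⟩
    exact ⟨Or.inr ⟨ρ, hρ, t, ht, Or.inl h1⟩, Or.inr ⟨ρ, hρ, t, ht, Or.inr h2⟩⟩

/-- The node labels used in heads of rules of a transformation (`Γ_T`). -/
def Transformation.nlabels {F : Constructors N} (T : Transformation N E F) : Set N :=
  {A | (∃ ρ ∈ T.nodeRules, ρ.head = A) ∨ ∃ ρ ∈ T.edgeRules, ρ.src = A ∨ ρ.tgt = A}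

/-- The edge labels used in heads of rules of a transformation (`Σ_T`). -/
def Transformation.elabels {F : Constructors N} (T : Transformation N E F) : Set E :=
  {r | ∃ ρ ∈ T.edgeRules, ρ.lab = r}

/-- Answers of the union `Q_A^T` of the bodies of `A`-node rules. -/
def QAans {F : Constructors N} (T : Transformation N E F) (A : N) (G : Graph N E) :
    Set ((Fin (F.arity A)) → ℕ) :=
  {t | ∃ ρ ∈ T.nodeRules, ∃ h : ρ.head = A,
        (fun i => t (Fin.cast (congrArg F.arity h) i)) ∈ ρ.body.answers G}

/-- Answers of the union `Q_{A,R,B}^T` of the bodies of matching edge rules. -/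
def QABans {F : Constructors N} (T : Transformation N E F)
    (A : N) (R : SRole E) (B : N) (G : Graph N E) :
    Set ((Fin (F.arity A) → ℕ) × (Fin (F.arity B) → ℕ)) :=
  match R with
  | SRole.fwd r =>
      {ts | ∃ ρ ∈ T.edgeRules, ρ.lab = r ∧
        ∃ (h1 : ρ.src = A) (h2 : ρ.tgt = B),
          Sum.elim (fun i => ts.1 (Fin.cast (congrArg F.arity h1) i))
                   (fun i => ts.2 (Fin.cast (congrArg F.arity h2) i)) ∈ ρ.body.answers G}
  | SRole.bwd r =>
      {ts | ∃ ρ ∈ T.edgeRules, ρ.lab = r ∧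
        ∃ (h1 : ρ.src = B) (h2 : ρ.tgt = A),
          Sum.elim (fun i => ts.2 (Fin.cast (congrArg F.arity h1) i))
                   (fun i => ts.1 (Fin.cast (congrArg F.arity h2) i)) ∈ ρ.body.answers G}

/-- `(T,S) ⊨ ⊤ ⊑ ⊔Γ_T`: every node of every output graph carries some label in `Γ_T`. -/
def TopCovered {F : Constructors N} (T : Transformation N E F) (S : Schema N E) : Prop :=
  ∀ G ∈ L S, ∀ u ∈ (T.apply G).dom, ∃ A ∈ T.nlabels, u ∈ (T.apply G).nodeLab A

/-- A node rule is productive modulo a schema. -/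
def NodeRule.Productive {F : Constructors N} (ρ : NodeRule N E F) (S : Schema N E) : Prop :=
  ∃ G ∈ L S, (ρ.body.answers G).Nonempty

/-- An edge rule is productive modulo a schema. -/
def EdgeRule.Productive {F : Constructors N} (ρ : EdgeRule N E F) (S : Schema N E) : Prop :=
  ∃ G ∈ L S, (ρ.body.answers G).Nonempty

/-- A transformation is trimmed modulo a schema. -/
def Transformation.Trimmed {F : Constructors N} (T : Transformation N E F)
    (S : Schema N E) : Prop :=
  (∀ ρ ∈ T.nodeRules, ρ.Productive S) ∧
  (∀ ρ ∈ T.edgeRules, ρ.Productive S) ∧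
  (∀ A ∈ T.nlabels, ∃ ρ ∈ T.nodeRules, ρ.head = A) ∧
  (∀ r ∈ T.elabels, ∃ ρ ∈ T.edgeRules, ρ.lab = r)

/-- The set of all L0 statements over `Γ_T`, `Σ_T` satisfied by all outputs of `T`
on inputs conforming to `S`. -/
def elicited {F : Constructors N} (T : Transformation N E F) (S : Schema N E) :
    Set (L0Stmt N E) :=
  {st | L0Stmt.Over st T.nlabels T.elabels ∧ ∀ G ∈ L S, L0Sat (T.apply G) st}

/-! ## Horn-ALCIF -/

/-- Horn-ALCIF concept inclusions; `K`, `K'` are (possibly empty) intersections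
of concept names, represented as lists. -/
inductive HornCI (N E : Type) : Type
  | atom (K : List N) (A : N)                      -- K ⊑ A
  | bot (K : List N)                               -- K ⊑ ⊥
  | all (K : List N) (R : SRole E) (K' : List N)   -- K ⊑ ∀R.K'
  | ex (K : List N) (R : SRole E) (K' : List N)    -- K ⊑ ∃R.K'
  | nex (K : List N) (R : SRole E) (K' : List N)   -- K ⊑ ∄R.K'
  | le1 (K : List N) (R : SRole E) (K' : List N)   -- K ⊑ ∃≤1 R.K'

/-- A node satisfies an intersection of concept names. -/
def conjSat {N E : Type} (G : Graph N E) (K : List N) (u : ℕ) : Prop :=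
  u ∈ G.dom ∧ ∀ A ∈ K, u ∈ G.nodeLab A

/-- Satisfaction of a Horn-ALCIF concept inclusion in a graph. -/
def HornCI.Sat {N E : Type} (G : Graph N E) : HornCI N E → Prop
  | .atom K A => ∀ u, conjSat G K u → u ∈ G.nodeLab A
  | .bot K => ∀ u, ¬ conjSat G K u
  | .all K R K' => ∀ u, conjSat G K u → ∀ v, (u, v) ∈ G.srel R → conjSat G K' v
  | .ex K R K' => ∀ u, conjSat G K u → ∃ v, (u, v) ∈ G.srel R ∧ conjSat G K' v
  | .nex K R K' => ∀ u, conjSat G K u → ¬ ∃ v, (u, v) ∈ G.srel R ∧ conjSat G K' v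
  | .le1 K R K' => ∀ u, conjSat G K u →
      {v | (u, v) ∈ G.srel R ∧ conjSat G K' v}.Subsingleton

/-- The concept names appearing in a Horn-ALCIF concept inclusion. -/
def HornCI.nlabels {N E : Type} : HornCI N E → Set N
  | .atom K A => {B | B ∈ K} ∪ {A}
  | .bot K => {B | B ∈ K}
  | .all K _ K' => {B | B ∈ K} ∪ {B | B ∈ K'}
  | .ex K _ K' => {B | B ∈ K} ∪ {B | B ∈ K'}
  | .nex K _ K' => {B | B ∈ K} ∪ {B | B ∈ K'}
  | .le1 K _ K' => {B | B ∈ K} ∪ {B | B ∈ K'}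

/-- The roles appearing in a Horn-ALCIF concept inclusion. -/
def HornCI.roles {N E : Type} : HornCI N E → Set (SRole E)
  | .atom _ _ => ∅
  | .bot _ => ∅
  | .all _ R _ => {R}
  | .ex _ R _ => {R}
  | .nex _ R _ => {R}
  | .le1 _ R _ => {R}

/-- A graph is a model of a Horn-ALCIF TBox. -/
def HornModels {N E : Type} (G : Graph N E) (T : Set (HornCI N E)) : Prop :=
  ∀ ci ∈ T, ci.Sat G

/-- Unrestricted (finite or infinite) entailment modulo a Horn-ALCIF TBox. -/
def HornEntails {N E : Type} (T : Set (HornCI N E)) (ci : HornCI N E) : Prop :=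
  ∀ G : Graph N E, HornModels G T → ci.Sat G

/-- A finmod cycle `K₁, R₁, …, K_n` (with `K_{n} = K₁`) in a TBox. -/
def IsFinmodCycle {N E : Type} (T : Set (HornCI N E)) (n : ℕ)
    (K : Fin (n + 1) → List N) (R : Fin n → SRole E) : Prop :=
  K (Fin.last n) = K 0 ∧
  ∀ i : Fin n,
    HornEntails T (HornCI.ex (K i.castSucc) (R i) (K i.succ)) ∧
    HornEntails T (HornCI.le1 (K i.succ) (R i).inv (K i.castSucc))

/-- A TBox is closed under reversing finmod cycles. -/
def ReversalClosed {N E : Type} (T : Set (HornCI N E)) : Prop :=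
  ∀ (n : ℕ) (K : Fin (n + 1) → List N) (R : Fin n → SRole E),
    IsFinmodCycle T n K R →
    ∀ i : Fin n,
      HornCI.ex (K i.succ) (R i).inv (K i.castSucc) ∈ T ∧
      HornCI.le1 (K i.castSucc) (R i) (K i.succ) ∈ T

/-- The completion `𝒯*`: the least extension of `𝒯` closed under reversing
finmod cycles (obtained by exhaustively reversing finmod cycles). -/
def completion {N E : Type} (T : Set (HornCI N E)) : Set (HornCI N E) :=
  ⋂₀ {T' | T ⊆ T' ∧ ReversalClosed T'}

/-- A triple `(K, R, K')` is satisfiable modulo a TBox. -/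
def TripleSat {N E : Type} (T : Set (HornCI N E)) (K : List N) (R : SRole E)
    (K' : List N) : Prop :=
  ∃ G : Graph N E, HornModels G T ∧
    ∃ u u', conjSat G K u ∧ (u, u') ∈ G.srel R ∧ conjSat G K' u'

/-- A TBox is S-driven. -/
def SDriven {N E : Type} (S : Schema N E) (T : Set (HornCI N E)) : Prop :=
  (∀ K (R : SRole E) K', HornCI.ex K R K' ∈ T → TripleSat T K R K' →
    ∃ A ∈ S.nlab, ∃ A' ∈ S.nlab, A ∈ K ∧ A' ∈ K' ∧ HornCI.ex [A] R [A'] ∈ T) ∧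
  (∀ K (R : SRole E) K', HornCI.le1 K R K' ∈ T → TripleSat T K R K' →
    ∃ A ∈ S.nlab, ∃ A' ∈ S.nlab, A ∈ K ∧ A' ∈ K' ∧ HornCI.le1 [A] R [A'] ∈ T)

/-! ## Sparsity and skeleta -/

/-- Simple paths in a graph (viewed as an undirected multigraph). -/
structure GPath {N E : Type} (G : Graph N E) : Type where
  len : ℕ
  verts : Fin (len + 1) → ℕ
  edges : Fin len → E × ℕ × ℕ
  verts_mem : ∀ i, verts i ∈ G.dom
  edges_mem : ∀ i, edges i ∈ G.edgeTriples
  conn : ∀ i : Fin len,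
    (edges i).2 = (verts i.castSucc, verts i.succ) ∨
    (edges i).2 = (verts i.succ, verts i.castSucc)

/-- A path is simple: edges are pairwise distinct and no node is repeated,
except that the two endpoints may coincide (forming a cycle). -/
def GPath.Simple {N E : Type} {G : Graph N E} (p : GPath G) : Prop :=
  Function.Injective p.edges ∧
  ∀ i j : Fin (p.len + 1), p.verts i = p.verts j →
    i = j ∨ (i = 0 ∧ j = Fin.last p.len) ∨ (j = 0 ∧ i = Fin.last p.len)

/-- `u` is an endpoint of the path. -/
def GPath.IsEndpoint {N E : Type} {G : Graph N E} (p : GPath G) (u : ℕ) : Prop :=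
  p.verts 0 = u ∨ p.verts (Fin.last p.len) = u

/-- The graph is a `(k, l)`-skeleton: at most `k` distinguished nodes connected
by at most `l` simple paths, pairwise disjoint except possibly at endpoints,
covering all nodes and edges of the graph. -/
def IsSkeleton {N E : Type} (G : Graph N E) (k l : ℕ) : Prop :=
  ∃ (D : Set ℕ) (m : ℕ) (P : Fin m → GPath G),
    D ⊆ G.dom ∧ D.Finite ∧ D.ncard ≤ k ∧ m ≤ l ∧
    (∀ i, (P i).Simple) ∧
    (∀ i, (P i).verts 0 ∈ D ∧ (P i).verts (Fin.last (P i).len) ∈ D) ∧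
    (∀ i j, i ≠ j → ∀ u, u ∈ Set.range (P i).verts → u ∈ Set.range (P j).verts →
      (P i).IsEndpoint u ∧ (P j).IsEndpoint u) ∧
    (∀ u ∈ G.dom, ∃ i, u ∈ Set.range (P i).verts) ∧
    (∀ t ∈ G.edgeTriples, ∃ i a, (P i).edges a = t)

/-- An edge of `G` crossing the boundary of a set `X` of nodes. -/
def Crossing {N E : Type} (G : Graph N E) (X : Set ℕ) (t : E × ℕ × ℕ) : Prop :=
  t ∈ G.edgeTriples ∧ ((t.2.1 ∈ X ∧ t.2.2 ∉ X) ∨ (t.2.1 ∉ X ∧ t.2.2 ∈ X))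

/-- `X` carries a finitely branching tree attached to `base` by a single edge. -/
def IsAttachedTree {N E : Type} (G : Graph N E) (base X : Set ℕ) : Prop :=
  X.Nonempty ∧ X ⊆ G.dom ∧
  (G.induce X).ConnectedG ∧ (G.induce X).AcyclicG ∧
  (∀ u ∈ X, G.FinBranching u) ∧
  (∃! t : E × ℕ × ℕ, Crossing G X t) ∧
  (∀ t, Crossing G X t → (t.2.1 ∈ X → t.2.2 ∈ base) ∧ (t.2.2 ∈ X → t.2.1 ∈ base))

/-- A possibly infinite graph is `c`-sparse: it consists of a finite connected
`c`-sparse graph with finitely many finitely branching trees attached. -/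
def Graph.SparseDecomp {N E : Type} (G : Graph N E) (c : ℕ) : Prop :=
  ∃ (core : Set ℕ) (comps : Set (Set ℕ)),
    core ⊆ G.dom ∧ core.Finite ∧
    (G.induce core).ConnectedG ∧
    (G.induce core).edgeTriples.Finite ∧
    (G.induce core).edgeTriples.ncard ≤ core.ncard + c ∧
    comps.Finite ∧ ⋃₀ comps = G.dom \ core ∧
    (∀ X ∈ comps, ∀ Y ∈ comps, X ≠ Y → Disjoint X Y) ∧
    (∀ X ∈ comps, IsAttachedTree G core X)

/-
Output graphs of a transformation are finite, use only the labels in `Γ_T` and `Σ_T`, and give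
each node at most one label, because the node constructors have disjoint ranges. So `T(G)`
conforms to `S'` as soon as every node gets some label and the participation constraints of `S'`
hold. On a finite graph each constraint `δ_{S'}(A, R, B)` is a condition on the number of
`R`-successors labelled `B` (at least one, at most one, or none), and `T_{S'}` contains exactly
the inclusions `A ⊑ ∃R.B`, `A ⊑ ∃≤1 R.B` and `A ⊑ ∄R.B` that express these conditions.
-/

/-- What the inclusions of `T_S` with left-hand side `A` and role `R.B` demand of the set `s` of
`R`-successors with label `B` of an `A`-node, where `c = δ_S(A, R, B)`. -/
def Card.TBoxOk (c : Card) (s : Set ℕ) : Prop :=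
  ((c = .one ∨ c = .plus) → s.Nonempty) ∧
  ((c = .one ∨ c = .opt ∨ c = .zero) → s.Subsingleton) ∧
  (c = .zero → s = ∅)

theorem Card.ok_iff_tBoxOk {c : Card} {s : Set ℕ} (hs : s.Finite) : c.ok s ↔ c.TBoxOk s := by
  have hpos : 1 ≤ s.ncard ↔ s.Nonempty := Set.ncard_pos hs
  have hle : s.ncard ≤ 1 ↔ s.Subsingleton := Set.ncard_le_one hs
  rw [Card.TBoxOk, ← hpos, ← hle, ← Set.ncard_eq_zero hs]
  cases c <;> simp [Card.ok, Card.allowed, hs, -Set.ncard_eq_zero, -Set.ncard_eq_one] <;> omega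

namespace Concept

variable {G : Graph N E} {R : SRole E} {B : N} {u : ℕ}

theorem mem_interp_ex_atom :
    u ∈ (ex R (atom B)).interp G ↔ u ∈ G.dom ∧ (G.succ R B u).Nonempty :=
  Iff.rfl

theorem mem_interp_le1_atom :
    u ∈ (le1 R (atom B)).interp G ↔ u ∈ G.dom ∧ (G.succ R B u).Subsingleton :=
  Iff.rfl

theorem mem_interp_neg_ex_atom :
    u ∈ (neg (ex R (atom B))).interp G ↔ u ∈ G.dom ∧ G.succ R B u = ∅ := by
  rw [interp, Set.mem_sdiff, mem_interp_ex_atom, Set.not_nonempty_iff_eq_empty.symm]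
  tauto

end Concept

theorem models_schemaTBox_iff {G : Graph N E} {S : Schema N E} :
    Models G (schemaTBox S) ↔ ∀ A ∈ S.nlab, ∀ B ∈ S.nlab, ∀ R : SRole E, R.base ∈ S.elabs →
      ∀ u ∈ G.nodeLab A, (S.delta A R B).TBoxOk (G.succ R B u) := by
  constructor
  · intro hM A hA B hB R hR u hu
    refine ⟨fun hc => ?_, fun hc => ?_, fun hc => ?_⟩
    · exact (Concept.mem_interp_ex_atom.1
        (hM _ ⟨A, hA, B, hB, R, hR, .inl ⟨hc, rfl⟩⟩ hu)).2
    · exact (Concept.mem_interp_le1_atom.1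
        (hM _ ⟨A, hA, B, hB, R, hR, .inr (.inl ⟨hc, rfl⟩)⟩ hu)).2
    · exact (Concept.mem_interp_neg_ex_atom.1
        (hM _ ⟨A, hA, B, hB, R, hR, .inr (.inr ⟨hc, rfl⟩)⟩ hu)).2
  · rintro h ci ⟨A, hA, B, hB, R, hR, ⟨hc, rfl⟩ | ⟨hc, rfl⟩ | ⟨hc, rfl⟩⟩ u hu <;>
      obtain ⟨hex, hle1, hnex⟩ := h A hA B hB R hR u hu
    · exact Concept.mem_interp_ex_atom.2 ⟨G.nodeLab_sub A hu, hex hc⟩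
    · exact Concept.mem_interp_le1_atom.2 ⟨G.nodeLab_sub A hu, hle1 hc⟩
    · exact Concept.mem_interp_neg_ex_atom.2 ⟨G.nodeLab_sub A hu, hnex hc⟩

theorem conforms_iff_models_schemaTBox {G : Graph N E} {S : Schema N E} (hG : G.dom.Finite) :
    Conforms G S ↔ (∀ u ∈ G.dom, ∃! A, u ∈ G.nodeLab A) ∧
      (∀ A, (G.nodeLab A).Nonempty → A ∈ S.nlab) ∧
      (∀ r, (G.edgeRel r).Nonempty → r ∈ S.elabs) ∧ Models G (schemaTBox S) := by
  have hsucc (R : SRole E) (B : N) (u : ℕ) : (G.succ R B u).Finite :=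
    hG.subset fun _ hv => G.nodeLab_sub B hv.2
  simp only [Conforms, models_schemaTBox_iff, Card.ok_iff_tBoxOk, hsucc]

theorem C2RPQ.answers_finite {V : Type} [Finite V] (q : C2RPQ N E V) {G : Graph N E}
    (hG : G.dom.Finite) : (q.answers G).Finite :=
  (Set.Finite.pi fun _ : V => hG).subset fun _ ht i _ => ht.1 i

namespace Transformation

variable {F : Constructors N} (T : Transformation N E F) {G : Graph N E}

theorem apply_dom_finite (hG : G.dom.Finite) : (T.apply G).dom.Finite := by
  have hnode : (⋃ ρ ∈ {ρ | ρ ∈ T.nodeRules}, F.f ρ.head '' ρ.body.answers G).Finite :=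
    T.nodeRules.finite_toSet.biUnion fun ρ _ => (ρ.body.answers_finite hG).image _
  have hedge : (⋃ ρ ∈ {ρ | ρ ∈ T.edgeRules},
      (fun t => F.f ρ.src fun i => t (Sum.inl i)) '' ρ.body.answers G ∪
      (fun t => F.f ρ.tgt fun i => t (Sum.inr i)) '' ρ.body.answers G).Finite :=
    T.edgeRules.finite_toSet.biUnion fun ρ _ =>
      ((ρ.body.answers_finite hG).image _).union ((ρ.body.answers_finite hG).image _)
  refine (hnode.union hedge).subset ?_
  rintro u (⟨ρ, hρ, t, ht, rfl⟩ | ⟨ρ, hρ, t, ht, rfl | rfl⟩)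
  · exact .inl (Set.mem_biUnion hρ ⟨t, ht, rfl⟩)
  · exact .inr (Set.mem_biUnion hρ (.inl ⟨t, ht, rfl⟩))
  · exact .inr (Set.mem_biUnion hρ (.inr ⟨t, ht, rfl⟩))

theorem apply_finite (hG : G.Finite) : (T.apply G).Finite := by
  refine ⟨T.apply_dom_finite hG.1, ?_, ?_⟩
  · refine (T.nodeRules.finite_toSet.image NodeRule.head).subset fun A hA => ?_
    obtain ⟨u, ρ, hρ, rfl, -⟩ := Set.nonempty_iff_ne_empty.2 hA
    exact ⟨ρ, hρ, rfl⟩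
  · refine (T.edgeRules.finite_toSet.image EdgeRule.lab).subset fun r hr => ?_
    obtain ⟨p, ρ, hρ, rfl, -⟩ := Set.nonempty_iff_ne_empty.2 hr
    exact ⟨ρ, hρ, rfl⟩

variable {T}

theorem mem_nlabels_of_mem_nodeLab {u : ℕ} {A : N} (hu : u ∈ (T.apply G).nodeLab A) :
    A ∈ T.nlabels :=
  let ⟨ρ, hρ, hA, _⟩ := hu
  .inl ⟨ρ, hρ, hA⟩

theorem mem_elabels_of_mem_edgeRel {p : ℕ × ℕ} {r : E} (hp : p ∈ (T.apply G).edgeRel r) :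
    r ∈ T.elabels :=
  let ⟨ρ, hρ, hr, _⟩ := hp
  ⟨ρ, hρ, hr⟩

theorem existsUnique_mem_nodeLab_iff {u : ℕ} :
    (∃! A, u ∈ (T.apply G).nodeLab A) ↔ ∃ A ∈ T.nlabels, u ∈ (T.apply G).nodeLab A := by
  refine ⟨fun ⟨A, hA, _⟩ => ⟨A, mem_nlabels_of_mem_nodeLab hA, hA⟩, fun ⟨A, _, hA⟩ => ⟨A, hA, ?_⟩⟩
  obtain ⟨ρ, -, rfl, t, -, rfl⟩ := hA
  rintro B ⟨ρ', -, rfl, t', -, heq⟩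
  by_contra hne
  exact F.disj _ _ hne t' t heq.symm

theorem apply_mem_L_iff {S' : Schema N E} (hn : T.nlabels ⊆ (↑S'.nlab : Set N))
    (he : T.elabels ⊆ (↑S'.elabs : Set E)) (hG : G.Finite) :
    T.apply G ∈ L S' ↔
      (∀ u ∈ (T.apply G).dom, ∃ A ∈ T.nlabels, u ∈ (T.apply G).nodeLab A) ∧
        Models (T.apply G) (schemaTBox S') := by
  have hfin := T.apply_finite hG
  have hlabels : ∀ A, ((T.apply G).nodeLab A).Nonempty → A ∈ S'.nlab :=
    fun _ ⟨_, hu⟩ => hn (mem_nlabels_of_mem_nodeLab hu)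
  have hedges : ∀ r, ((T.apply G).edgeRel r).Nonempty → r ∈ S'.elabs :=
    fun _ ⟨_, hp⟩ => he (mem_elabels_of_mem_edgeRel hp)
  rw [L, Set.mem_ofPred_eq, conforms_iff_models_schemaTBox hfin.1]
  simp only [hfin, true_and, existsUnique_mem_nodeLab_iff]
  exact ⟨fun h => ⟨h.1, h.2.2.2⟩, fun h => ⟨h.1, hlabels, hedges, h.2⟩⟩

end Transformation

/-- Type checking. Assuming `Γ_T ⊆ Γ_{S'}` and `Σ_T ⊆ Σ_{S'}`:
`T(G) ∈ L(S')` for every `G ∈ L(S)` iff `(T,S) ⊨ ⊤ ⊑ ⊔Γ_T` and `(T,S) ⊨ T_{S'}`. -/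
theorem type_checking {N E : Type} {F : Constructors N}
    (S S' : Schema N E) (T : Transformation N E F)
    (hn : T.nlabels ⊆ (↑S'.nlab : Set N)) (he : T.elabels ⊆ (↑S'.elabs : Set E)) :
    (∀ G ∈ L S, T.apply G ∈ L S') ↔
      (TopCovered T S ∧ ∀ G ∈ L S, Models (T.apply G) (schemaTBox S')) := by
  rw [TopCovered, ← forall₂_and]
  exact forall₂_congr fun G hG => T.apply_mem_L_iff hn he hG.1

end GDB
end

section
/- Let S be a schema and T a graph transformation. Then (T,S) ⊨ ⊤ ⊑ ⊔Γ_T (for every G ∈ L(S) every node of T(G) carries some label in Γ_T) if and only if, for all A, B ∈ Γ_T and all R ∈ Σ_T±, the containment ∃ȳ. Q_{A,R,B}^T(x̄, ȳ) ⊆_S Q_A^T(x̄) holds. -/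
namespace GDB

variable {N E : Type}

/-! Nodes of `T(G)` produced by node rules are labelled by construction, so only an
endpoint `f_A(ā)` of an edge produced by an edge rule can lack a label. Since the
constructors are injective with pairwise disjoint ranges, `f_A(ā)` carries some label
iff it carries `A`, i.e. iff `ā` is an answer of `Q_A^T`. -/

theorem Constructors.eq_of_f_eq {F : Constructors N} {A B : N} {s : Fin (F.arity A) → ℕ}
    {t : Fin (F.arity B) → ℕ} (h : F.f A s = F.f B t) : A = B := by
  by_contra hne
  exact F.disj A B hne s t h

namespace Transformation

variable {F : Constructors N} {T : Transformation N E F} {G : Graph N E}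

theorem mem_nlabels_of_mem_apply_nodeLab {A : N} {u : ℕ} (h : u ∈ (T.apply G).nodeLab A) :
    A ∈ T.nlabels := by
  obtain ⟨ρ, hρ, rfl, -⟩ := h
  exact Or.inl ⟨ρ, hρ, rfl⟩

theorem eq_of_f_mem_apply_nodeLab {A B : N} {t : Fin (F.arity A) → ℕ}
    (h : F.f A t ∈ (T.apply G).nodeLab B) : A = B := by
  obtain ⟨ρ, -, rfl, _, -, he⟩ := h
  exact F.eq_of_f_eq he

theorem f_mem_apply_nodeLab_iff {A : N} {t : Fin (F.arity A) → ℕ} :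
    F.f A t ∈ (T.apply G).nodeLab A ↔ t ∈ QAans T A G := by
  constructor
  · rintro ⟨ρ, hρ, rfl, t', ht', he⟩
    exact ⟨ρ, hρ, rfl, F.inj _ he ▸ ht'⟩
  · rintro ⟨ρ, hρ, rfl, ht⟩
    exact ⟨ρ, hρ, rfl, t, ht, rfl⟩

theorem f_fst_mem_apply_dom_of_mem_QABans {A B : N} {R : SRole E}
    {ts : (Fin (F.arity A) → ℕ) × (Fin (F.arity B) → ℕ)} (h : ts ∈ QABans T A R B G) :
    F.f A ts.1 ∈ (T.apply G).dom := by
  cases R with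
  | fwd r =>
    obtain ⟨ρ, hρ, -, rfl, rfl, ht⟩ := h
    exact Or.inr ⟨ρ, hρ, _, ht, Or.inl rfl⟩
  | bwd r =>
    obtain ⟨ρ, hρ, -, rfl, rfl, ht⟩ := h
    exact Or.inr ⟨ρ, hρ, _, ht, Or.inr rfl⟩

theorem mem_QABans_fwd {ρ : EdgeRule N E F} (hρ : ρ ∈ T.edgeRules)
    {t : Fin (F.arity ρ.src) ⊕ Fin (F.arity ρ.tgt) → ℕ} (ht : t ∈ ρ.body.answers G) :
    (t ∘ Sum.inl, t ∘ Sum.inr) ∈ QABans T ρ.src (.fwd ρ.lab) ρ.tgt G :=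
  ⟨ρ, hρ, rfl, rfl, rfl, (Sum.elim_comp_inl_inr t).symm ▸ ht⟩

theorem mem_QABans_bwd {ρ : EdgeRule N E F} (hρ : ρ ∈ T.edgeRules)
    {t : Fin (F.arity ρ.src) ⊕ Fin (F.arity ρ.tgt) → ℕ} (ht : t ∈ ρ.body.answers G) :
    (t ∘ Sum.inr, t ∘ Sum.inl) ∈ QABans T ρ.tgt (.bwd ρ.lab) ρ.src G :=
  ⟨ρ, hρ, rfl, rfl, rfl, (Sum.elim_comp_inl_inr t).symm ▸ ht⟩

theorem mem_apply_dom_iff {u : ℕ} :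
    u ∈ (T.apply G).dom ↔ (∃ A, u ∈ (T.apply G).nodeLab A) ∨
      ∃ A ∈ T.nlabels, ∃ B ∈ T.nlabels, ∃ R : SRole E, R.base ∈ T.elabels ∧
        ∃ ts ∈ QABans T A R B G, u = F.f A ts.1 := by
  constructor
  · rintro (⟨ρ, hρ, t, ht, rfl⟩ | ⟨ρ, hρ, t, ht, rfl | rfl⟩)
    · exact Or.inl ⟨ρ.head, ρ, hρ, rfl, t, ht, rfl⟩
    · exact Or.inr ⟨ρ.src, Or.inr ⟨ρ, hρ, Or.inl rfl⟩, ρ.tgt,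
        Or.inr ⟨ρ, hρ, Or.inr rfl⟩, .fwd ρ.lab, ⟨ρ, hρ, rfl⟩, _, mem_QABans_fwd hρ ht, rfl⟩
    · exact Or.inr ⟨ρ.tgt, Or.inr ⟨ρ, hρ, Or.inr rfl⟩, ρ.src,
        Or.inr ⟨ρ, hρ, Or.inl rfl⟩, .bwd ρ.lab, ⟨ρ, hρ, rfl⟩, _, mem_QABans_bwd hρ ht, rfl⟩
  · rintro (⟨A, hA⟩ | ⟨A, -, B, -, R, -, ts, hts, rfl⟩)
    · exact (T.apply G).nodeLab_sub A hA
    · exact f_fst_mem_apply_dom_of_mem_QABans hts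

end Transformation

/-- `(T,S) ⊨ ⊤ ⊑ ⊔Γ_T` iff for all `A, B ∈ Γ_T` and `R ∈ Σ_T±`,
`∃ȳ. Q_{A,R,B}^T(x̄,ȳ) ⊆_S Q_A^T(x̄)`. -/
theorem top_covered_iff_containment {N E : Type} {F : Constructors N}
    (S : Schema N E) (T : Transformation N E F) :
    TopCovered T S ↔
      (∀ A ∈ T.nlabels, ∀ B ∈ T.nlabels, ∀ R : SRole E, SRole.base R ∈ T.elabels →
        ∀ G ∈ L S, ∀ ts ∈ QABans T A R B G, ts.1 ∈ QAans T A G) := by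
  constructor
  · intro hcov A hA B hB R hR G hG ts hts
    have hdom :=
      Transformation.mem_apply_dom_iff.2 (Or.inr ⟨A, hA, B, hB, R, hR, ts, hts, rfl⟩)
    obtain ⟨A', -, hA'⟩ := hcov G hG _ hdom
    obtain rfl := Transformation.eq_of_f_mem_apply_nodeLab hA'
    exact Transformation.f_mem_apply_nodeLab_iff.1 hA'
  · intro hcont G hG u hu
    rcases Transformation.mem_apply_dom_iff.1 hu with
      ⟨A, hA⟩ | ⟨A, hA, B, hB, R, hR, ts, hts, rfl⟩
    · exact ⟨A, Transformation.mem_nlabels_of_mem_apply_nodeLab hA, hA⟩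
    · exact ⟨A, hA, Transformation.f_mem_apply_nodeLab_iff.2 (hcont A hA B hB R hR G hG ts hts)⟩

end GDB
end

section
/- Let S be a schema and T a graph transformation with Γ_T ⊆ Γ_S, Σ_T ⊆ Σ_S, and (T,S) ⊨ ⊤ ⊑ ⊔Γ_T. Then for all A, B ∈ Γ_T and R ∈ Σ_T±: (T,S) ⊨ A ⊑ ∃≤1 R.B (for every G ∈ L(S), every A-labeled node of T(G) has at most one R-successor labeled B) if and only if, for every G ∈ L(S), every answer (t̄, t̄') to the query ∃x̄. (Q_A^T(x̄) ∧ Q_{A,R,B}^T(x̄,ȳ) ∧ Q_{A,R,B}^T(x̄,z̄)) with free variables ȳ, z̄ satisfies t̄ = t̄' componentwise. -/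
namespace GDB

variable {N E : Type}

/-!
The nodes of `T(G)` labelled `A` are the values `f_A(t̄)` for answers `t̄` of `Q_A^T`, and since
the constructors are injective with disjoint ranges, `f_A(t̄)` has an `R`-edge to `f_B(s̄)` exactly
when `(t̄, s̄)` answers `Q_{A,R,B}^T`. The query does not require `s̄` to answer `Q_B^T`; this is
supplied by `⊤ ⊑ ⊔Γ_T`: the node `f_B(s̄)` carries some label, and by disjointness of the ranges
that label can only be `B`.
-/

theorem Graph.mem_dom_of_mem_srel {G : Graph N E} {R : SRole E} {u v : ℕ}
    (h : (u, v) ∈ G.srel R) : u ∈ G.dom ∧ v ∈ G.dom := by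
  cases R with
  | fwd r => exact G.edgeRel_dom r u v h
  | bwd r => exact (G.edgeRel_dom r v u h).symm

variable {F : Constructors N}

theorem Constructors.f_eq_f_iff {A B : N} (s : Fin (F.arity A) → ℕ) (t : Fin (F.arity B) → ℕ) :
    F.f A s = F.f B t ↔ ∃ h : B = A, (fun i => s (Fin.cast (congrArg F.arity h) i)) = t := by
  constructor
  · intro heq
    obtain rfl : A = B := by_contra fun hne => F.disj A B hne s t heq
    exact ⟨rfl, F.inj A heq⟩
  · rintro ⟨rfl, rfl⟩
    rfl

theorem EdgeRule.exists_answer_eq_endpoints_iff (ρ : EdgeRule N E F) (G : Graph N E) {A B : N}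
    (t : Fin (F.arity A) → ℕ) (s : Fin (F.arity B) → ℕ) :
    (∃ te ∈ ρ.body.answers G, F.f A t = F.f ρ.src (fun i => te (Sum.inl i)) ∧
        F.f B s = F.f ρ.tgt (fun i => te (Sum.inr i))) ↔
      ∃ (h1 : ρ.src = A) (h2 : ρ.tgt = B),
        Sum.elim (fun i => t (Fin.cast (congrArg F.arity h1) i))
          (fun i => s (Fin.cast (congrArg F.arity h2) i)) ∈ ρ.body.answers G := by
  simp only [F.f_eq_f_iff]
  constructor
  · rintro ⟨te, hte, ⟨h1, ht⟩, ⟨h2, hs⟩⟩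
    refine ⟨h1, h2, ?_⟩
    rw [ht, hs]
    convert hte
    exact Sum.elim_comp_inl_inr te
  · rintro ⟨h1, h2, hte⟩
    exact ⟨_, hte, ⟨h1, rfl⟩, ⟨h2, rfl⟩⟩

namespace Transformation

variable (T : Transformation N E F) (G : Graph N E)

theorem mem_nodeLab_apply_iff (A : N) (u : ℕ) :
    u ∈ (T.apply G).nodeLab A ↔ ∃ t ∈ QAans T A G, u = F.f A t := by
  constructor
  · rintro ⟨ρ, hρ, rfl, t, ht, rfl⟩
    exact ⟨t, ⟨ρ, hρ, rfl, ht⟩, rfl⟩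
  · rintro ⟨t, ⟨ρ, hρ, rfl, ht⟩, rfl⟩
    exact ⟨ρ, hρ, rfl, _, ht, rfl⟩

theorem mk_mem_srel_apply_iff (A B : N) (R : SRole E)
    (t : Fin (F.arity A) → ℕ) (s : Fin (F.arity B) → ℕ) :
    (F.f A t, F.f B s) ∈ (T.apply G).srel R ↔ (t, s) ∈ QABans T A R B G := by
  cases R <;>
    simp only [Graph.srel, apply, QABans, Set.mem_ofPred_eq, EdgeRule.exists_answer_eq_endpoints_iff]

end Transformation

theorem TopCovered.mk_mem_nodeLab {T : Transformation N E F} {S : Schema N E}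
    (htop : TopCovered T S) {G : Graph N E} (hG : G ∈ L S) {B : N} {s : Fin (F.arity B) → ℕ}
    (hs : F.f B s ∈ (T.apply G).dom) : F.f B s ∈ (T.apply G).nodeLab B := by
  obtain ⟨B', -, hB'⟩ := htop G hG _ hs
  obtain ⟨s', -, hss'⟩ := (T.mem_nodeLab_apply_iff G B' _).mp hB'
  obtain ⟨rfl, -⟩ := (F.f_eq_f_iff s s').mp hss'
  exact hB'

theorem entails_le1_iff_general {N E : Type} {F : Constructors N}
    (S : Schema N E) (T : Transformation N E F)
    (htop : TopCovered T S) (A B : N) (R : SRole E) :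
    (∀ G ∈ L S, ∀ u ∈ (T.apply G).nodeLab A,
        {v | (u, v) ∈ (T.apply G).srel R ∧ v ∈ (T.apply G).nodeLab B}.Subsingleton) ↔
    (∀ G ∈ L S, ∀ t s s', t ∈ QAans T A G →
        (t, s) ∈ QABans T A R B G → (t, s') ∈ QABans T A R B G → s = s') := by
  constructor
  · intro hsem G hG t s s' ht hs hs'
    have hsucc : ∀ s₀, (t, s₀) ∈ QABans T A R B G →
        (F.f A t, F.f B s₀) ∈ (T.apply G).srel R ∧ F.f B s₀ ∈ (T.apply G).nodeLab B := by
      intro s₀ hs₀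
      have hedge := (T.mk_mem_srel_apply_iff G A B R t s₀).mpr hs₀
      exact ⟨hedge, htop.mk_mem_nodeLab hG (Graph.mem_dom_of_mem_srel hedge).2⟩
    have hu := (T.mem_nodeLab_apply_iff G A _).mpr ⟨t, ht, rfl⟩
    exact F.inj B (hsem G hG _ hu (hsucc s hs) (hsucc s' hs'))
  · intro hq G hG u hu v hv v' hv'
    obtain ⟨t, ht, rfl⟩ := (T.mem_nodeLab_apply_iff G A u).mp hu
    obtain ⟨s, -, rfl⟩ := (T.mem_nodeLab_apply_iff G B v).mp hv.2
    obtain ⟨s', -, rfl⟩ := (T.mem_nodeLab_apply_iff G B v').mp hv'.2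
    exact congrArg (F.f B) (hq G hG t s s' ht ((T.mk_mem_srel_apply_iff G A B R t s).mp hv.1)
      ((T.mk_mem_srel_apply_iff G A B R t s').mp hv'.1))

/-- Under the stated hypotheses, `(T,S) ⊨ A ⊑ ∃≤1 R.B` iff for
every `G ∈ L(S)`, any two answers `(t̄,t̄')` of
`∃x̄. (Q_A^T(x̄) ∧ Q_{A,R,B}^T(x̄,ȳ) ∧ Q_{A,R,B}^T(x̄,z̄))` agree componentwise. -/
theorem entails_le1_iff {N E : Type} {F : Constructors N}
    (S : Schema N E) (T : Transformation N E F)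
    (hn : T.nlabels ⊆ (↑S.nlab : Set N)) (he : T.elabels ⊆ (↑S.elabs : Set E))
    (htop : TopCovered T S)
    (A B : N) (hA : A ∈ T.nlabels) (hB : B ∈ T.nlabels)
    (R : SRole E) (hR : SRole.base R ∈ T.elabels) :
    (∀ G ∈ L S, ∀ u ∈ (T.apply G).nodeLab A,
        {v | (u, v) ∈ (T.apply G).srel R ∧ v ∈ (T.apply G).nodeLab B}.Subsingleton) ↔
    (∀ G ∈ L S, ∀ t s s', t ∈ QAans T A G →
        (t, s) ∈ QABans T A R B G → (t, s') ∈ QABans T A R B G → s = s') :=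
  entails_le1_iff_general S T htop A B R

end GDB
end
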